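/- arXiv:1501.01331 — 3 statements merged into one kernel-verified Lean document; each statement's English description precedes it below -/
import Mathlib

section
/- Let f : {0,1}^n → {0,1} and let K be a conjunction (a partial assignment) with N_K ⊆ N_f, i.e. every point satisfying K satisfies f. Let K₁,…,K_t be conjunctions that are implicants of f. If, after deleting from each K_j all literals occurring in K, the resulting conjunctions K'₁,…,K'_t satisfy K'₁ ∨ … ∨ K'_t ≡ 1 (with the empty conjunction taken as the constant 1), then every point satisfying K satisfies K₁ ∨ … ∨ K_t; that is, K is absorbed by the collection K₁,…,K_t. -/
/-- A point `p` satisfies a term (conjunction of literals) `T`. -/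
def sat {n : ℕ} (p : Fin n → Bool) (T : Finset (Fin n × Bool)) : Prop :=
  ∀ l ∈ T, p l.1 = l.2

/-- A term is consistent: it does not contain a variable together with its negation. -/
def consistentT {n : ℕ} (T : Finset (Fin n × Bool)) : Prop :=
  ∀ i : Fin n, ¬((i, true) ∈ T ∧ (i, false) ∈ T)

/-- A DNF (finite set of terms) realizes `f` : the disjunction of its terms equals `f`. -/
def realizes {n : ℕ} (D : Finset (Finset (Fin n × Bool)))
    (f : (Fin n → Bool) → Bool) : Prop :=
  ∀ p, f p = true ↔ ∃ T ∈ D, sat p T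

/-- Hamming distance between two Boolean points. -/
def hamming {n : ℕ} (p q : Fin n → Bool) : ℕ :=
  (Finset.univ.filter (fun i => p i ≠ q i)).card

theorem sat_of_sat_filter_notMem {n : ℕ} {p : Fin n → Bool} {K T : Finset (Fin n × Bool)}
    (hK : sat p K) (hT : sat p (T.filter (fun l => l ∉ K))) : sat p T := by
  intro l hl
  by_cases hlK : l ∈ K
  · exact hK l hlK
  · exact hT l (Finset.mem_filter.mpr ⟨hl, hlK⟩)

theorem stmt8_general {n t : ℕ}
    (K : Finset (Fin n × Bool))
    (Ks : Fin t → Finset (Fin n × Bool))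
    (htaut : ∀ p : Fin n → Bool, ∃ j, sat p ((Ks j).filter (fun l => l ∉ K))) :
    ∀ p, sat p K → ∃ j, sat p (Ks j) := by
  intro p hp
  obtain ⟨j, hj⟩ := htaut p
  exact ⟨j, sat_of_sat_filter_notMem hp hj⟩

/-- Zhuravlev's absorption criterion (sufficiency). If `K` is an implicant of `f`, the
`Ks j` are implicants of `f`, and after deleting from each `Ks j` all literals occurring
in `K` the resulting conjunctions form a tautology, then every point satisfying `K`
satisfies some `Ks j`, i.e. `K` is absorbed by the collection. -/
theorem stmt8 {n t : ℕ} (f : (Fin n → Bool) → Bool)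
    (K : Finset (Fin n × Bool)) (hK : consistentT K)
    (hKf : ∀ p, sat p K → f p = true)
    (Ks : Fin t → Finset (Fin n × Bool))
    (hKs : ∀ j, consistentT (Ks j))
    (himp : ∀ j, ∀ p, sat p (Ks j) → f p = true)
    (htaut : ∀ p : Fin n → Bool, ∃ j, sat p ((Ks j).filter (fun l => l ∉ K))) :
    ∀ p, sat p K → ∃ j, sat p (Ks j) :=
  stmt8_general K Ks htaut
end

section
/- Let f : {0,1}^n → {0,1} be such that its zero matrix (the list of all zeros of f, as rows) has no two equal columns, no column constant 0 or constant 1, and f has no two zeros at Hamming distance 1. Suppose K = x_{i₁}^{σ₁} ∧ … ∧ x_{i_t}^{σ_t} is a conjunction such that the literals x_{i₂}^{σ₂⊕1},…,x_{i_t}^{σ_t⊕1} form a decomposition of x_{i₁}^{σ₁} with respect to the zero matrix: the column vectors associated with these literals OR together to the column of x_{i₁}^{σ₁} and are each componentwise below it. Then K is an implicant of f : every point satisfying K is a one of f. -/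
theorem stmt10_general {k n : ℕ} (zeros : Fin k → Fin n → Bool)
    (f : (Fin n → Bool) → Bool)
    (hf : ∀ p, f p = false ↔ ∃ r, ∀ j, p j = zeros r j)
    (t : ℕ) (i₀ : Fin n) (σ₀ : Bool) (is : Fin t → Fin n) (σs : Fin t → Bool)
    (hdecomp : ∀ r : Fin k, zeros r i₀ = σ₀ ↔ ∃ s, zeros r (is s) = !(σs s)) :
    ∀ p : Fin n → Bool, (p i₀ = σ₀ ∧ ∀ s, p (is s) = σs s) → f p = true := by
  rintro p ⟨hp₀, hpK⟩
  by_contra hp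
  obtain ⟨r, rfl⟩ : ∃ r, p = zeros r := by
    simpa only [funext_iff] using (hf p).mp (Bool.not_eq_true _ ▸ hp)
  -- the decomposition makes the zero `r` violate some literal `x_{is s}^{σs s}` of `K`
  obtain ⟨s, hs⟩ := (hdecomp r).mp hp₀
  simp [hpK s] at hs

/-- Lemma 2: if the (column vectors of the) literals `x_{is s}^{¬ σs s}` form a
decomposition of the literal column of `x_{i₀}^{σ₀}` with respect to the zero matrix of
`f` (zero matrix with pairwise distinct, non-constant columns, `f` without adjacent
zeros), then the conjunction `x_{i₀}^{σ₀} ∧ ⋀_s x_{is s}^{σs s}` is an implicant of `f`. -/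
theorem stmt10 {k n : ℕ} (zeros : Fin k → Fin n → Bool)
    (f : (Fin n → Bool) → Bool)
    (hf : ∀ p, f p = false ↔ ∃ r, ∀ j, p j = zeros r j)
    (hcols : ∀ j j' : Fin n, j ≠ j' →
      (fun r => zeros r j) ≠ (fun r => zeros r j'))
    (hconst : ∀ j : Fin n, (∃ r, zeros r j = true) ∧ (∃ r, zeros r j = false))
    (hadj : ∀ p q, f p = false → f q = false → hamming p q ≠ 1)
    (t : ℕ) (i₀ : Fin n) (σ₀ : Bool) (is : Fin t → Fin n) (σs : Fin t → Bool)
    (hdecomp : ∀ r : Fin k, zeros r i₀ = σ₀ ↔ ∃ s, zeros r (is s) = !(σs s)) :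
    ∀ p : Fin n → Bool, (p i₀ = σ₀ ∧ ∀ s, p (is s) = σs s) → f p = true :=
  stmt10_general zeros f hf t i₀ σ₀ is σs hdecomp
end

section
/- The Boolean cube {0,1}^m can be partitioned into C(m, ⌊m/2⌋) pairwise disjoint symmetric saturated chains, where the number of chains of length m - 2p + 1 (i.e., with m - 2p + 1 elements) equals C(m,p) - C(m,p-1) for p = 1,…,⌊m/2⌋ (with the convention C(m,0)-C(m,-1)=1 counting the single chain of length m+1). -/
/-!
Induction on the ground set (de Bruijn–Tengbergen–Kruyswijk). Given a symmetric chain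
decomposition of the subsets of `s` and a new point `a`, each chain `A₁ ⊂ ⋯ ⊂ A_k` yields the
chains `A₁ ⊂ ⋯ ⊂ A_k ⊂ A_k ∪ {a}` and `A₁ ∪ {a} ⊂ ⋯ ⊂ A_{k-1} ∪ {a}` (the latter dropped when
`k = 1`), both symmetric in the powerset of `s ∪ {a}`, and together these partition it.
Since every symmetric chain of length at least `|s| - 2p + 1` meets rank `p` exactly once and each
set of rank `p` lies in exactly one chain, there are `C(|s|, p)` such chains; differences of these
counts give the number of chains of each length.
-/

open Finset

variable {α : Type*}

namespace IsChain

variable {C : Finset (Finset α)}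

theorem injOn_card (hC : IsChain (· ⊆ ·) (C : Set (Finset α))) :
    Set.InjOn card (C : Set (Finset α)) := by
  intro A hA B hB hAB
  by_contra hne
  rcases hC hA hB hne with h | h
  · exact hne (eq_of_subset_of_card_le h hAB.ge)
  · exact hne (eq_of_subset_of_card_le h hAB.le).symm

theorem exists_card_eq (hC : IsChain (· ⊆ ·) (C : Set (Finset α))) {a b k : ℕ}
    (hcard : C.card = b + 1 - a) (hrank : ∀ A ∈ C, a ≤ A.card ∧ A.card ≤ b)
    (hk : a ≤ k ∧ k ≤ b) : ∃ A ∈ C, A.card = k := by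
  have himage : C.image card = Icc a b := by
    refine eq_of_subset_of_card_le (fun x hx => ?_) ?_
    · obtain ⟨A, hA, rfl⟩ := mem_image.1 hx
      exact mem_Icc.2 (hrank A hA)
    · rw [card_image_of_injOn hC.injOn_card, hcard, Nat.card_Icc]
  simpa using himage.ge (mem_Icc.2 hk)

theorem sup_mem [DecidableEq α] (hC : IsChain (· ⊆ ·) (C : Set (Finset α))) (hne : C.Nonempty) :
    C.sup id ∈ C := by
  rw [← sup'_eq_sup hne]
  refine sup'_mem (C : Set (Finset α)) (fun A hA B hB => ?_) C hne id fun _ => id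
  rcases eq_or_ne A B with rfl | hne
  · simpa using hA
  · rcases hC hA hB hne with h | h
    · rwa [sup_eq_right.2 h]
    · rwa [sup_eq_left.2 h]

end IsChain

/-- Saturation and symmetry are encoded by counting: a chain with `|s| - 2p + 1` members, all of
rank in `[p, |s| - p]`, has exactly one member of each of these ranks. -/
structure IsSymmChain (s : Finset α) (p : ℕ) (C : Finset (Finset α)) : Prop where
  isChain : IsChain (· ⊆ ·) (C : Set (Finset α))
  subset_of_mem : ∀ A ∈ C, A ⊆ s
  card_eq : C.card = s.card - 2 * p + 1
  card_mem_bounds : ∀ A ∈ C, p ≤ A.card ∧ A.card ≤ s.card - p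

structure IsSymmChainDecomposition (s : Finset α) (𝒞 : Finset (Finset (Finset α))) : Prop where
  existsUnique_mem : ∀ A ⊆ s, ∃! C, C ∈ 𝒞 ∧ A ∈ C
  isSymmChain : ∀ C ∈ 𝒞, ∃ p, IsSymmChain s p C

namespace IsSymmChain

variable {s : Finset α} {p : ℕ} {C : Finset (Finset α)}

theorem nonempty (hC : IsSymmChain s p C) : C.Nonempty :=
  card_pos.1 (by rw [hC.card_eq]; omega)

theorem two_mul_le (hC : IsSymmChain s p C) : 2 * p ≤ s.card := by
  obtain ⟨A, hA⟩ := hC.nonempty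
  have := card_le_card (hC.subset_of_mem A hA)
  have := hC.card_mem_bounds A hA
  omega

theorem exists_card_eq (hC : IsSymmChain s p C) {k : ℕ} (hk : p ≤ k ∧ k ≤ s.card - p) :
    ∃ A ∈ C, A.card = k :=
  hC.isChain.exists_card_eq (by have := hC.two_mul_le; rw [hC.card_eq]; omega)
    hC.card_mem_bounds hk

theorem notMem_of_mem (hC : IsSymmChain s p C) {a : α} (ha : a ∉ s) {A : Finset α}
    (hA : A ∈ C) : a ∉ A :=
  fun h => ha (hC.subset_of_mem A hA h)

end IsSymmChain

section Insert

variable [DecidableEq α] (a : α)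

-- `D.sup id` is the top of the chain `D`.
def extendChain (D : Finset (Finset α)) : Finset (Finset α) :=
  insert (insert a (D.sup id)) D

def shiftChain (D : Finset (Finset α)) : Finset (Finset α) :=
  (D.erase (D.sup id)).image (insert a)

def insertChains (𝒞 : Finset (Finset (Finset α))) : Finset (Finset (Finset α)) :=
  𝒞.image (extendChain a) ∪ {D ∈ 𝒞 | 1 < D.card}.image (shiftChain a)

variable {a} {s : Finset α} {p : ℕ} {D : Finset (Finset α)} {X : Finset α}

theorem mem_extendChain : X ∈ extendChain a D ↔ X = insert a (D.sup id) ∨ X ∈ D :=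
  mem_insert

theorem mem_shiftChain : X ∈ shiftChain a D ↔ ∃ A ∈ D, A ≠ D.sup id ∧ insert a A = X := by
  simp only [shiftChain, mem_image, mem_erase, and_assoc]
  exact exists_congr fun _ => by tauto

theorem mem_insertChains {𝒞 : Finset (Finset (Finset α))} {C : Finset (Finset α)} :
    C ∈ insertChains a 𝒞 ↔ ∃ D ∈ 𝒞, C = extendChain a D ∨ 1 < D.card ∧ C = shiftChain a D := by
  simp only [insertChains, mem_union, mem_image, mem_filter]
  constructor
  · rintro (⟨D, hD, rfl⟩ | ⟨D, ⟨hD, hD₁⟩, rfl⟩)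
    exacts [⟨D, hD, .inl rfl⟩, ⟨D, hD, .inr ⟨hD₁, rfl⟩⟩]
  · rintro ⟨D, hD, rfl | ⟨hD₁, rfl⟩⟩
    exacts [.inl ⟨D, hD, rfl⟩, .inr ⟨D, ⟨hD, hD₁⟩, rfl⟩]

namespace IsSymmChain

theorem sup_mem (hD : IsSymmChain s p D) : D.sup id ∈ D :=
  hD.isChain.sup_mem hD.nonempty

theorem extend (hD : IsSymmChain s p D) (ha : a ∉ s) :
    IsSymmChain (insert a s) p (extendChain a D) := by
  have hp := hD.two_mul_le
  have hsup := hD.card_mem_bounds _ hD.sup_mem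
  have hle : ∀ A ∈ D, A ⊆ D.sup id := fun A hA => le_sup (f := id) hA
  have hcard_top : (insert a (D.sup id)).card = (D.sup id).card + 1 :=
    card_insert_of_notMem (hD.notMem_of_mem ha hD.sup_mem)
  have htop : insert a (D.sup id) ∉ D := fun h => hD.notMem_of_mem ha h (mem_insert_self _ _)
  refine ⟨?_, ?_, ?_, ?_⟩
  · rw [extendChain, coe_insert]
    exact hD.isChain.insert fun A hA _ => .inr ((hle A hA).trans (subset_insert _ _))
  · simp only [mem_extendChain]
    rintro A (rfl | hA)
    · exact insert_subset_insert a (hD.subset_of_mem _ hD.sup_mem)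
    · exact (hD.subset_of_mem A hA).trans (subset_insert _ _)
  · rw [extendChain, card_insert_of_notMem htop, hD.card_eq, card_insert_of_notMem ha]
    omega
  · simp only [mem_extendChain, card_insert_of_notMem ha]
    rintro A (rfl | hA)
    · omega
    · have := hD.card_mem_bounds A hA
      omega

theorem shift (hD : IsSymmChain s p D) (ha : a ∉ s) (hD₁ : 1 < D.card) :
    IsSymmChain (insert a s) (p + 1) (shiftChain a D) := by
  have hsup := hD.card_mem_bounds _ hD.sup_mem
  have hlt : ∀ A ∈ D, A ≠ D.sup id → A.card < (D.sup id).card := fun A hA hne =>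
    card_lt_card ((le_sup (f := id) hA).ssubset_of_ne hne)
  have hcard_insert : ∀ A ∈ D, (insert a A).card = A.card + 1 := fun A hA =>
    card_insert_of_notMem (hD.notMem_of_mem ha hA)
  refine ⟨?_, ?_, ?_, ?_⟩
  · intro X hX Y hY hXY
    obtain ⟨A, hA, -, rfl⟩ := mem_shiftChain.1 hX
    obtain ⟨B, hB, -, rfl⟩ := mem_shiftChain.1 hY
    rcases hD.isChain hA hB (fun h => hXY (h ▸ rfl)) with h | h
    · exact .inl (insert_subset_insert a h)
    · exact .inr (insert_subset_insert a h)
  · intro X hX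
    obtain ⟨A, hA, -, rfl⟩ := mem_shiftChain.1 hX
    exact insert_subset_insert a (hD.subset_of_mem A hA)
  · have hinj : Set.InjOn (insert a) (D.erase (D.sup id) : Set (Finset α)) :=
      fun A hA B hB h => by
        rw [← erase_insert (hD.notMem_of_mem ha (mem_of_mem_erase hA)), h,
          erase_insert (hD.notMem_of_mem ha (mem_of_mem_erase hB))]
    rw [shiftChain, card_image_of_injOn hinj, card_erase_of_mem hD.sup_mem, hD.card_eq,
      card_insert_of_notMem ha]
    rw [hD.card_eq] at hD₁
    omega
  · intro X hX
    obtain ⟨A, hA, hne, rfl⟩ := mem_shiftChain.1 hX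
    have := hD.card_mem_bounds A hA
    have := hlt A hA hne
    rw [hcard_insert A hA, card_insert_of_notMem ha]
    omega

theorem erase_mem_of_mem_extendChain (hD : IsSymmChain s p D) (ha : a ∉ s)
    (hX : X ∈ extendChain a D) : X.erase a ∈ D := by
  rcases mem_extendChain.1 hX with rfl | hX
  · rw [erase_insert (hD.notMem_of_mem ha hD.sup_mem)]
    exact hD.sup_mem
  · rwa [erase_eq_of_notMem (hD.notMem_of_mem ha hX)]

theorem erase_mem_of_mem_shiftChain (hD : IsSymmChain s p D) (ha : a ∉ s)
    (hX : X ∈ shiftChain a D) : X.erase a ∈ D := by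
  obtain ⟨A, hA, -, rfl⟩ := mem_shiftChain.1 hX
  rwa [erase_insert (hD.notMem_of_mem ha hA)]

theorem disjoint_extendChain_shiftChain (hD : IsSymmChain s p D) (ha : a ∉ s) :
    Disjoint (extendChain a D) (shiftChain a D) := by
  refine disjoint_left.2 fun X hX hX' => ?_
  obtain ⟨A, hA, hne, rfl⟩ := mem_shiftChain.1 hX'
  rcases mem_extendChain.1 hX with h | h
  · exact hne (by rw [← erase_insert (hD.notMem_of_mem ha hA), h,
      erase_insert (hD.notMem_of_mem ha hD.sup_mem)])
  · exact hD.notMem_of_mem ha h (mem_insert_self a A)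

end IsSymmChain

end Insert

namespace IsSymmChainDecomposition

variable {s : Finset α} {𝒞 : Finset (Finset (Finset α))}

theorem eq_of_mem (h : IsSymmChainDecomposition s 𝒞) {C C' : Finset (Finset α)} (hC : C ∈ 𝒞)
    (hC' : C' ∈ 𝒞) {A : Finset α} (hA : A ∈ C) (hA' : A ∈ C') : C = C' := by
  obtain ⟨p, hp⟩ := h.isSymmChain C hC
  exact (h.existsUnique_mem A (hp.subset_of_mem A hA)).unique ⟨hC, hA⟩ ⟨hC', hA'⟩

theorem empty : IsSymmChainDecomposition (∅ : Finset α) {{∅}} := by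
  refine ⟨fun A hA => ⟨{∅}, by simp [subset_empty.1 hA], by simp⟩, fun C hC => ⟨0, ?_⟩⟩
  rw [mem_singleton.1 hC]
  exact ⟨by simp [IsChain], by simp, by simp, by simp⟩

theorem card_filter_card_ge (h : IsSymmChainDecomposition s 𝒞) {p : ℕ} (hp : 2 * p ≤ s.card) :
    {C ∈ 𝒞 | s.card - 2 * p + 1 ≤ C.card}.card = s.card.choose p := by
  choose! chainOf hchainOf using fun A (hA : A ⊆ s) => (h.existsUnique_mem A hA).exists
  rw [← card_powersetCard]
  symm
  refine card_nbij chainOf (fun A hA => ?_) (fun A hA B hB hAB => ?_) (fun C hC => ?_)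
  · obtain ⟨hAs, hAp⟩ := mem_powersetCard.1 hA
    obtain ⟨hC, hAC⟩ := hchainOf A hAs
    obtain ⟨q, hq⟩ := h.isSymmChain _ hC
    have := hq.card_mem_bounds A hAC
    have := hq.two_mul_le
    exact mem_filter.2 ⟨hC, by rw [hq.card_eq]; omega⟩
  · obtain ⟨hAs, hAp⟩ := mem_powersetCard.1 hA
    obtain ⟨hBs, hBp⟩ := mem_powersetCard.1 hB
    obtain ⟨hC, hAC⟩ := hchainOf A hAs
    have hBC : B ∈ chainOf A := hAB ▸ (hchainOf B hBs).2
    obtain ⟨q, hq⟩ := h.isSymmChain _ hC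
    exact hq.isChain.injOn_card hAC hBC (hAp.trans hBp.symm)
  · obtain ⟨hC, hCp⟩ := mem_filter.1 hC
    obtain ⟨q, hq⟩ := h.isSymmChain _ hC
    have := hq.two_mul_le
    rw [hq.card_eq] at hCp
    obtain ⟨A, hAC, hAp⟩ := hq.exists_card_eq (k := p) (by omega)
    have hAs := hq.subset_of_mem A hAC
    exact ⟨A, mem_powersetCard.2 ⟨hAs, hAp⟩,
      h.eq_of_mem (hchainOf A hAs).1 hC (hchainOf A hAs).2 hAC⟩

theorem card_eq_choose (h : IsSymmChainDecomposition s 𝒞) :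
    𝒞.card = s.card.choose (s.card / 2) := by
  rw [← h.card_filter_card_ge (by omega), filter_true_of_mem fun C hC => ?_]
  obtain ⟨q, hq⟩ := h.isSymmChain C hC
  have := hq.two_mul_le
  rw [hq.card_eq]
  omega

variable [DecidableEq α] {a : α}

theorem exists_mem_insertChains (h : IsSymmChainDecomposition s 𝒞) {X : Finset α}
    (hX : X ⊆ insert a s) : ∃ C ∈ insertChains a 𝒞, X ∈ C := by
  obtain ⟨D, hD, hXD⟩ := (h.existsUnique_mem (X.erase a) (subset_insert_iff.1 hX)).exists
  obtain ⟨p, hp⟩ := h.isSymmChain D hD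
  by_cases haX : a ∈ X
  · by_cases htop : X.erase a = D.sup id
    · refine ⟨extendChain a D, mem_insertChains.2 ⟨D, hD, .inl rfl⟩, mem_extendChain.2 (.inl ?_)⟩
      rw [← htop, insert_erase haX]
    · have hD₁ : 1 < D.card := one_lt_card.2 ⟨_, hXD, _, hp.sup_mem, htop⟩
      exact ⟨shiftChain a D, mem_insertChains.2 ⟨D, hD, .inr ⟨hD₁, rfl⟩⟩,
        mem_shiftChain.2 ⟨_, hXD, htop, insert_erase haX⟩⟩
  · rw [erase_eq_of_notMem haX] at hXD
    exact ⟨extendChain a D, mem_insertChains.2 ⟨D, hD, .inl rfl⟩, mem_extendChain.2 (.inr hXD)⟩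

theorem eq_of_mem_insertChains (h : IsSymmChainDecomposition s 𝒞) (ha : a ∉ s)
    {C C' : Finset (Finset α)} (hC : C ∈ insertChains a 𝒞) (hC' : C' ∈ insertChains a 𝒞)
    {X : Finset α} (hX : X ∈ C) (hX' : X ∈ C') : C = C' := by
  have erase_mem : ∀ {C}, C ∈ insertChains a 𝒞 → X ∈ C →
      ∃ D ∈ 𝒞, X.erase a ∈ D ∧ (C = extendChain a D ∨ C = shiftChain a D) := by
    intro C hC hX
    obtain ⟨D, hD, hCD⟩ := mem_insertChains.1 hC
    obtain ⟨p, hp⟩ := h.isSymmChain D hD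
    rcases hCD with rfl | ⟨-, rfl⟩
    exacts [⟨D, hD, hp.erase_mem_of_mem_extendChain ha hX, .inl rfl⟩,
      ⟨D, hD, hp.erase_mem_of_mem_shiftChain ha hX, .inr rfl⟩]
  obtain ⟨D, hD, hXD, hCD⟩ := erase_mem hC hX
  obtain ⟨D', hD', hXD', hCD'⟩ := erase_mem hC' hX'
  obtain rfl := h.eq_of_mem hD hD' hXD hXD'
  obtain ⟨p, hp⟩ := h.isSymmChain D hD
  have hdisj := hp.disjoint_extendChain_shiftChain ha
  rcases hCD with rfl | rfl <;> rcases hCD' with rfl | rfl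
  · rfl
  · exact absurd hX' (disjoint_left.1 hdisj hX)
  · exact absurd hX (disjoint_left.1 hdisj hX')
  · rfl

theorem insert (h : IsSymmChainDecomposition s 𝒞) (ha : a ∉ s) :
    IsSymmChainDecomposition (insert a s) (insertChains a 𝒞) := by
  refine ⟨fun X hX => ?_, fun C hC => ?_⟩
  · obtain ⟨C, hC, hXC⟩ := h.exists_mem_insertChains hX
    exact ⟨C, ⟨hC, hXC⟩, fun C' ⟨hC', hXC'⟩ => h.eq_of_mem_insertChains ha hC' hC hXC' hXC⟩
  · obtain ⟨D, hD, rfl | ⟨hD₁, rfl⟩⟩ := mem_insertChains.1 hC <;>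
      obtain ⟨p, hp⟩ := h.isSymmChain D hD
    exacts [⟨p, hp.extend ha⟩, ⟨p + 1, hp.shift ha hD₁⟩]

theorem card_filter_card_eq (h : IsSymmChainDecomposition s 𝒞) {p : ℕ} (hp₁ : 1 ≤ p)
    (hp : 2 * p ≤ s.card) :
    {C ∈ 𝒞 | C.card = s.card - 2 * p + 1}.card = s.card.choose p - s.card.choose (p - 1) := by
  have hsplit : {C ∈ 𝒞 | C.card = s.card - 2 * p + 1} =
      {C ∈ 𝒞 | s.card - 2 * p + 1 ≤ C.card} \ {C ∈ 𝒞 | s.card - 2 * (p - 1) + 1 ≤ C.card} := by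
    ext C
    simp only [mem_filter, mem_sdiff]
    constructor
    · rintro ⟨hC, hCp⟩
      exact ⟨⟨hC, hCp.ge⟩, fun ⟨_, h'⟩ => by omega⟩
    · rintro ⟨⟨hC, hge⟩, hlt⟩
      obtain ⟨q, hq⟩ := h.isSymmChain C hC
      have := hq.two_mul_le
      have := hq.card_eq
      refine ⟨hC, ?_⟩
      by_contra hne
      -- chain lengths have the parity of `|s| + 1`, so none has `|s| - 2p + 2` members
      exact hlt ⟨hC, by omega⟩
  rw [hsplit, card_sdiff_of_subset (monotone_filter_right _ fun C _ => by omega),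
    h.card_filter_card_ge hp, h.card_filter_card_ge (by omega)]

end IsSymmChainDecomposition

theorem exists_isSymmChainDecomposition [DecidableEq α] (s : Finset α) :
    ∃ 𝒞, IsSymmChainDecomposition s 𝒞 := by
  induction s using Finset.induction_on with
  | empty => exact ⟨_, .empty⟩
  | insert a s ha ih =>
    obtain ⟨𝒞, h⟩ := ih
    exact ⟨_, h.insert ha⟩

/-- Hansel / de Bruijn–Tengbergen–Kruyswijk symmetric chain decomposition: the Boolean
cube (powerset of `Fin m`) can be partitioned into `C(m, ⌊m/2⌋)` pairwise disjoint
saturated symmetric chains; the number of chains with `m - 2p + 1` elements (ranks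
running from `p` to `m - p`) equals `C(m,p) - C(m,p-1)` for `p = 1, …, ⌊m/2⌋`. -/
theorem stmt15 (m : ℕ) :
    ∃ 𝒞 : Finset (Finset (Finset (Fin m))),
      (∀ A : Finset (Fin m), ∃! C, C ∈ 𝒞 ∧ A ∈ C) ∧
      (∀ C ∈ 𝒞, IsChain (· ⊆ ·) (C : Set (Finset (Fin m))) ∧
        ∃ p ≤ m / 2, C.card = m - 2 * p + 1 ∧
          ∀ A ∈ C, p ≤ A.card ∧ A.card ≤ m - p) ∧
      𝒞.card = m.choose (m / 2) ∧
      (∀ p : ℕ, 1 ≤ p → p ≤ m / 2 →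
        (𝒞.filter (fun C => C.card = m - 2 * p + 1)).card
          = m.choose p - m.choose (p - 1)) := by
  obtain ⟨𝒞, h⟩ := exists_isSymmChainDecomposition (univ : Finset (Fin m))
  have hm : (univ : Finset (Fin m)).card = m := card_fin m
  refine ⟨𝒞, fun A => h.existsUnique_mem A (subset_univ A), fun C hC => ?_, ?_, ?_⟩
  · obtain ⟨p, hp⟩ := h.isSymmChain C hC
    have hp_le := hp.two_mul_le
    have hcard := hp.card_eq
    have hbounds := hp.card_mem_bounds
    rw [hm] at hp_le hcard hbounds
    exact ⟨hp.isChain, p, by omega, hcard, hbounds⟩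
  · rw [h.card_eq_choose, hm]
  · intro p hp₁ hp
    have hcount := h.card_filter_card_eq hp₁ (p := p) (by omega)
    rwa [hm] at hcount
end
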